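/- Let n ≥ 2 and m be natural numbers. Suppose for each i ∈ {1,…,m} we are given indices k_i < ℓ_i in {0,…,n−1} and a 2×2 complex unitary matrix A_i, and let Ã_i denote the n×n embedding of A_i at positions (k_i, ℓ_i). If the product Ã_m · Ã_{m−1} ⋯ Ã_1 equals the normalized Fourier transform matrix F of order n, then m ≥ (1/2)·n·log₂ n. -/

import Mathlib

/-!
For a matrix `M` let `H(M) = ∑ p q, -|M p q|² log |M p q|²`, so `H(1) = 0` and `H(F) = n log n`
since every entry of `F` has `|F p q|² = 1/n`. Left multiplication of a unitary `M` by a two-level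
unitary acting on rows `k, l` changes only those rows and, column by column, preserves
`s = |M k q|² + |M l q|²`. By concavity of `-x log x` the new pair contributes at most
`-s log s + s log 2`, and by subadditivity the old pair contributed at least `-s log s`; as the rows
of `M` are unit vectors, `H` grows by at most `∑ q, s log 2 = 2 log 2` per factor. Hence
`n log n ≤ 2 m log 2`.
-/

open Matrix

/-- The `n×n` embedding of a `2×2` matrix `A` at positions `(k, l)`:
`Ã(k,k)=A(1,1)`, `Ã(k,l)=A(1,2)`, `Ã(l,k)=A(2,1)`, `Ã(l,l)=A(2,2)`,
`Ã(j,j)=1` for `j ∉ {k,l}`, and all other entries `0`. -/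
def embedAt {n : ℕ} (k l : Fin n) (A : Matrix (Fin 2) (Fin 2) ℂ) :
    Matrix (Fin n) (Fin n) ℂ := fun p q =>
  if p = k ∧ q = k then A 0 0
  else if p = k ∧ q = l then A 0 1
  else if p = l ∧ q = k then A 1 0
  else if p = l ∧ q = l then A 1 1
  else if p = q then 1
  else 0

/-- The normalized Fourier transform matrix of order `n`. -/
noncomputable def fourierMatrix (n : ℕ) : Matrix (Fin n) (Fin n) ℂ :=
  fun p q => (1 / Real.sqrt n : ℝ) *
    Complex.exp (2 * Real.pi * Complex.I * (p : ℕ) * (q : ℕ) / (n : ℕ))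

open Real

namespace Real

lemma negMulLog_add_le {x y : ℝ} (hx : 0 ≤ x) (hy : 0 ≤ y) :
    negMulLog (x + y) ≤ negMulLog x + negMulLog y := by
  have hlog {z : ℝ} (hz : 0 ≤ z) (hzxy : z ≤ x + y) : z * log z ≤ z * log (x + y) := by
    rcases hz.eq_or_lt with rfl | hz
    · simp
    · exact mul_le_mul_of_nonneg_left (log_le_log hz hzxy) hz.le
  simp only [negMulLog, neg_mul]
  linarith [hlog hx (by linarith), hlog hy (by linarith)]

lemma negMulLog_add_negMulLog_le {x y : ℝ} (hx : 0 ≤ x) (hy : 0 ≤ y) :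
    negMulLog x + negMulLog y ≤ negMulLog (x + y) + (x + y) * log 2 := by
  have hmid := concaveOn_negMulLog.2 (Set.mem_Ici.mpr hx) (Set.mem_Ici.mpr hy)
    (by norm_num : (0 : ℝ) ≤ 1 / 2) (by norm_num : (0 : ℝ) ≤ 1 / 2) (by norm_num)
  have hhalf : negMulLog ((1 / 2 : ℝ) • x + (1 / 2 : ℝ) • y)
      = (negMulLog (x + y) + (x + y) * log 2) / 2 := by
    rw [smul_eq_mul, smul_eq_mul, ← mul_add, negMulLog_mul, negMulLog, one_div, log_inv]
    ring
  rw [hhalf, smul_eq_mul, smul_eq_mul] at hmid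
  linarith

end Real

namespace Matrix

variable {ι : Type*} [Fintype ι] [DecidableEq ι]

lemma sum_normSq_mulVec_of_mem_unitaryGroup {U : Matrix ι ι ℂ}
    (hU : U ∈ unitaryGroup ι ℂ) (v : ι → ℂ) :
    ∑ i, Complex.normSq ((U *ᵥ v) i) = ∑ i, Complex.normSq (v i) := by
  have h : star (U *ᵥ v) ⬝ᵥ (U *ᵥ v) = star v ⬝ᵥ v := by
    rw [star_mulVec, dotProduct_mulVec, vecMul_vecMul, ← star_eq_conjTranspose,
      mem_unitaryGroup_iff'.mp hU, vecMul_one]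
  simp only [dotProduct, Pi.star_apply, Complex.star_def, mul_comm (starRingEnd ℂ _),
    Complex.mul_conj] at h
  exact_mod_cast h

lemma sum_normSq_apply_of_mem_unitaryGroup {U : Matrix ι ι ℂ}
    (hU : U ∈ unitaryGroup ι ℂ) (p : ι) : ∑ q, Complex.normSq (U p q) = 1 := by
  have h := congrFun (congrFun (mem_unitaryGroup_iff.mp hU) p) p
  simp only [mul_apply, star_apply, Complex.star_def, Complex.mul_conj, one_apply_eq] at h
  exact_mod_cast h

end Matrix

lemma negMulLog_normSq_unitary_two_le {A : Matrix (Fin 2) (Fin 2) ℂ}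
    (hA : A ∈ unitaryGroup (Fin 2) ℂ) (u v : ℂ) :
    negMulLog (Complex.normSq (A 0 0 * u + A 0 1 * v))
        + negMulLog (Complex.normSq (A 1 0 * u + A 1 1 * v))
      ≤ negMulLog (Complex.normSq u) + negMulLog (Complex.normSq v)
        + (Complex.normSq u + Complex.normSq v) * log 2 := by
  have hmass := sum_normSq_mulVec_of_mem_unitaryGroup hA ![u, v]
  simp only [Fin.sum_univ_two, mulVec, dotProduct, Matrix.cons_val_zero,
    Matrix.cons_val_one] at hmass
  have hmix := negMulLog_add_negMulLog_le (Complex.normSq_nonneg (A 0 0 * u + A 0 1 * v))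
    (Complex.normSq_nonneg (A 1 0 * u + A 1 1 * v))
  rw [hmass] at hmix
  linarith [negMulLog_add_le (Complex.normSq_nonneg u) (Complex.normSq_nonneg v)]

namespace Matrix

variable {ι κ : Type*} [Fintype ι] [Fintype κ]

noncomputable def entryEntropy (M : Matrix ι κ ℂ) : ℝ :=
  ∑ p, ∑ q, negMulLog (Complex.normSq (M p q))

@[simp]
lemma entryEntropy_one [DecidableEq ι] : entryEntropy (1 : Matrix ι ι ℂ) = 0 := by
  refine Finset.sum_eq_zero fun p _ => Finset.sum_eq_zero fun q _ => ?_
  by_cases h : p = q <;> simp [one_apply, h]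

end Matrix

section embedAt

variable {n : ℕ} {κ : Type*} {k l : Fin n} {A : Matrix (Fin 2) (Fin 2) ℂ}

lemma embedAt_mul_apply_left (hkl : k ≠ l) (M : Matrix (Fin n) κ ℂ) (q : κ) :
    (embedAt k l A * M) k q = A 0 0 * M k q + A 0 1 * M l q := by
  rw [mul_apply, Fintype.sum_eq_add k l hkl]
  · simp [embedAt, Ne.symm hkl]
  · rintro r ⟨hrk, hrl⟩
    simp [embedAt, hrk, hrl, Ne.symm hrk]

lemma embedAt_mul_apply_right (hkl : k ≠ l) (M : Matrix (Fin n) κ ℂ) (q : κ) :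
    (embedAt k l A * M) l q = A 1 0 * M k q + A 1 1 * M l q := by
  rw [mul_apply, Fintype.sum_eq_add k l hkl]
  · simp [embedAt, hkl, Ne.symm hkl]
  · rintro r ⟨hrk, hrl⟩
    simp [embedAt, hrk, hrl, Ne.symm hkl, Ne.symm hrl]

lemma embedAt_mul_apply_of_ne {p : Fin n} (hpk : p ≠ k) (hpl : p ≠ l)
    (M : Matrix (Fin n) κ ℂ) (q : κ) : (embedAt k l A * M) p q = M p q := by
  rw [mul_apply, Finset.sum_eq_single p]
  · simp [embedAt, hpk, hpl]
  · intro r _ hrp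
    simp [embedAt, hpk, hpl, Ne.symm hrp]
  · simp

lemma conjTranspose_embedAt (hkl : k ≠ l) : (embedAt k l A)ᴴ = embedAt k l Aᴴ := by
  ext p q
  simp only [embedAt, conjTranspose_apply]
  split_ifs <;> grind [star_one, star_zero]

lemma embedAt_one (k l : Fin n) : embedAt k l 1 = 1 := by
  ext p q
  simp only [embedAt, Matrix.one_apply]
  split_ifs <;> grind

lemma embedAt_mul_embedAt (hkl : k ≠ l) (B : Matrix (Fin 2) (Fin 2) ℂ) :
    embedAt k l A * embedAt k l B = embedAt k l (A * B) := by
  ext p q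
  by_cases hpk : p = k
  · subst hpk; rw [embedAt_mul_apply_left hkl]
    simp only [embedAt, mul_apply, Fin.sum_univ_two]
    split_ifs <;> grind
  · by_cases hpl : p = l
    · subst hpl; rw [embedAt_mul_apply_right hkl]
      simp only [embedAt, mul_apply, Fin.sum_univ_two]
      split_ifs <;> grind
    · rw [embedAt_mul_apply_of_ne hpk hpl]
      simp [embedAt, hpk, hpl]

lemma embedAt_mem_unitaryGroup (hkl : k ≠ l) (hA : A ∈ unitaryGroup (Fin 2) ℂ) :
    embedAt k l A ∈ unitaryGroup (Fin n) ℂ := by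
  rw [mem_unitaryGroup_iff', star_eq_conjTranspose, conjTranspose_embedAt hkl,
    embedAt_mul_embedAt hkl, ← star_eq_conjTranspose, mem_unitaryGroup_iff'.mp hA, embedAt_one]

lemma entryEntropy_embedAt_mul_le [Fintype κ] (hkl : k ≠ l) (hA : A ∈ unitaryGroup (Fin 2) ℂ)
    (M : Matrix (Fin n) κ ℂ) :
    entryEntropy (embedAt k l A * M)
      ≤ entryEntropy M + (∑ q, (Complex.normSq (M k q) + Complex.normSq (M l q))) * log 2 := by
  set rowEntropy : Matrix (Fin n) κ ℂ → Fin n → ℝ :=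
    fun N p => ∑ q, negMulLog (Complex.normSq (N p q))
  have hrows (p : Fin n) (hp : p ≠ k ∧ p ≠ l) :
      rowEntropy (embedAt k l A * M) p - rowEntropy M p = 0 := by
    simp only [rowEntropy, embedAt_mul_apply_of_ne hp.1 hp.2, sub_self]
  calc entryEntropy (embedAt k l A * M)
      = entryEntropy M + ∑ p, (rowEntropy (embedAt k l A * M) p - rowEntropy M p) := by
        simp only [entryEntropy, rowEntropy, Finset.sum_sub_distrib]; ring
    _ = entryEntropy M + ∑ q,
          (negMulLog (Complex.normSq (A 0 0 * M k q + A 0 1 * M l q))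
            + negMulLog (Complex.normSq (A 1 0 * M k q + A 1 1 * M l q))
            - (negMulLog (Complex.normSq (M k q)) + negMulLog (Complex.normSq (M l q)))) := by
        rw [Fintype.sum_eq_add k l hkl hrows]
        simp only [rowEntropy, embedAt_mul_apply_left hkl, embedAt_mul_apply_right hkl,
          Finset.sum_sub_distrib, Finset.sum_add_distrib]
        ring
    _ ≤ entryEntropy M + ∑ q, (Complex.normSq (M k q) + Complex.normSq (M l q)) * log 2 := by
        gcongr with q
        linarith [negMulLog_normSq_unitary_two_le hA (M k q) (M l q)]
    _ = _ := by rw [Finset.sum_mul]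

end embedAt

section IsTwoLevelUnitary

variable {n : ℕ}

def IsTwoLevelUnitary (E : Matrix (Fin n) (Fin n) ℂ) : Prop :=
  ∃ k l A, k ≠ l ∧ A ∈ unitaryGroup (Fin 2) ℂ ∧ embedAt k l A = E

lemma IsTwoLevelUnitary.mem_unitaryGroup {E : Matrix (Fin n) (Fin n) ℂ}
    (hE : IsTwoLevelUnitary E) : E ∈ unitaryGroup (Fin n) ℂ := by
  obtain ⟨k, l, A, hkl, hA, rfl⟩ := hE
  exact embedAt_mem_unitaryGroup hkl hA

lemma IsTwoLevelUnitary.entryEntropy_mul_le {E M : Matrix (Fin n) (Fin n) ℂ}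
    (hE : IsTwoLevelUnitary E) (hM : M ∈ unitaryGroup (Fin n) ℂ) :
    entryEntropy (E * M) ≤ entryEntropy M + 2 * log 2 := by
  obtain ⟨k, l, A, hkl, hA, rfl⟩ := hE
  have hrows : ∑ q, (Complex.normSq (M k q) + Complex.normSq (M l q)) = 2 := by
    rw [Finset.sum_add_distrib, sum_normSq_apply_of_mem_unitaryGroup hM,
      sum_normSq_apply_of_mem_unitaryGroup hM]
    norm_num
  simpa [hrows] using entryEntropy_embedAt_mul_le hkl hA M

lemma entryEntropy_list_prod_le {L : List (Matrix (Fin n) (Fin n) ℂ)}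
    (hL : ∀ E ∈ L, IsTwoLevelUnitary E) : entryEntropy L.prod ≤ L.length * (2 * log 2) := by
  induction L with
  | nil => simp
  | cons E L ih =>
    have hE := hL E List.mem_cons_self
    have hL' : ∀ E' ∈ L, IsTwoLevelUnitary E' :=
      fun E' hE' => hL E' (List.mem_cons_of_mem _ hE')
    have hprod : L.prod ∈ unitaryGroup (Fin n) ℂ :=
      list_prod_mem fun E' hE' => (hL' E' hE').mem_unitaryGroup
    rw [List.prod_cons, List.length_cons, Nat.cast_succ]
    linarith [hE.entryEntropy_mul_le hprod, ih hL']

end IsTwoLevelUnitary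

lemma normSq_fourierMatrix_apply (n : ℕ) (p q : Fin n) :
    Complex.normSq (fourierMatrix n p q) = (n : ℝ)⁻¹ := by
  simp [fourierMatrix, Complex.normSq_eq_norm_sq, Complex.norm_exp]

lemma entryEntropy_fourierMatrix (n : ℕ) : entryEntropy (fourierMatrix n) = n * log n := by
  simp only [entryEntropy, normSq_fourierMatrix_apply, Finset.sum_const, Finset.card_univ,
    Fintype.card_fin, nsmul_eq_mul, negMulLog, log_inv]
  rcases eq_or_ne (n : ℝ) 0 with hn | hn
  · simp [hn]
  · field_simp

theorem fourier_lower_bound_general {n m : ℕ}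
    (k l : Fin m → Fin n) (hkl : ∀ i, k i < l i)
    (A : Fin m → Matrix (Fin 2) (Fin 2) ℂ) (hA : ∀ i, (A i)ᴴ * A i = 1)
    (hprod : (List.ofFn fun i : Fin m => embedAt (k i) (l i) (A i)).reverse.prod
      = fourierMatrix n) :
    (m : ℝ) ≥ (1 / 2) * n * Real.logb 2 n := by
  have hfactors : ∀ E ∈ (List.ofFn fun i : Fin m => embedAt (k i) (l i) (A i)).reverse,
      IsTwoLevelUnitary E := by
    simp only [List.mem_reverse, List.mem_ofFn, forall_exists_index, forall_apply_eq_imp_iff]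
    exact fun i => ⟨k i, l i, A i, (hkl i).ne, mem_unitaryGroup_iff'.mpr (hA i), rfl⟩
  have hbound := entryEntropy_list_prod_le hfactors
  rw [hprod, entryEntropy_fourierMatrix, List.length_reverse, List.length_ofFn] at hbound
  have hlog2 : 0 < log 2 := log_pos one_lt_two
  rw [ge_iff_le, logb, mul_div_assoc', div_le_iff₀ hlog2]
  linarith

theorem fourier_lower_bound {n m : ℕ} (hn : 2 ≤ n)
    (k l : Fin m → Fin n) (hkl : ∀ i, k i < l i)
    (A : Fin m → Matrix (Fin 2) (Fin 2) ℂ) (hA : ∀ i, (A i)ᴴ * A i = 1)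
    (hprod : (List.ofFn fun i : Fin m => embedAt (k i) (l i) (A i)).reverse.prod
      = fourierMatrix n) :
    (m : ℝ) ≥ (1 / 2) * n * Real.logb 2 n :=
  fourier_lower_bound_general k l hkl A hA hprod
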